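/- arXiv:2508.01607 — 2 statements merged into one kernel-verified Lean document; each statement's English description precedes it below -/
import Mathlib

section
/- Let D ⊊ ℝⁿ be a bounded domain with diameter d. With j'_D(x,y) = (1/2)·log((1 + |x−y|/δ(x))·(1 + |x−y|/δ(y))) and ζ'_D(x,y) = (1/2)·log((1 + d·|x−y|/η(x))·(1 + d·|x−y|/η(y))), we have j'_D(x,y) ≤ ζ'_D(x,y) ≤ 2·j'_D(x,y) for all x, y ∈ D. -/
noncomputable def deltaD {n : ℕ} (D : Set (EuclideanSpace ℝ (Fin n)))
    (z : EuclideanSpace ℝ (Fin n)) : ℝ :=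
  Metric.infDist z (frontier D)

noncomputable def etaD {n : ℕ} (D : Set (EuclideanSpace ℝ (Fin n)))
    (z : EuclideanSpace ℝ (Fin n)) : ℝ :=
  deltaD D z * (Metric.diam D - deltaD D z)

noncomputable def zetaD {n : ℕ} (D : Set (EuclideanSpace ℝ (Fin n)))
    (x y : EuclideanSpace ℝ (Fin n)) : ℝ :=
  Real.log (1 + Metric.diam D * dist x y / min (etaD D x) (etaD D y))

noncomputable def zetaD' {n : ℕ} (D : Set (EuclideanSpace ℝ (Fin n)))
    (x y : EuclideanSpace ℝ (Fin n)) : ℝ :=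
  (1 / 2) * Real.log ((1 + Metric.diam D * dist x y / etaD D x) *
    (1 + Metric.diam D * dist x y / etaD D y))

noncomputable def jD' {n : ℕ} (D : Set (EuclideanSpace ℝ (Fin n)))
    (x y : EuclideanSpace ℝ (Fin n)) : ℝ :=
  (1 / 2) * Real.log ((1 + dist x y / deltaD D x) * (1 + dist x y / deltaD D y))


/-! A ball of radius `δ(z)` about `z ∈ D` lies in `D`, so `2 δ(z) ≤ d`. Hence, with
`u = |x - y| / δ(z)`, the quantity `d |x - y| / η(z) = u · d / (d - δ(z))` lies between `u` and
`2u`, so `1 + u ≤ 1 + d |x - y| / η(z) ≤ (1 + u)²`. Multiplying over `z = x, y` and taking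
logarithms gives both inequalities. -/

open Metric Set

section NormedSpace

variable {E : Type*} [NormedAddCommGroup E] [NormedSpace ℝ E] [FiniteDimensional ℝ E]
  {D : Set E} {z : E}

theorem infDist_compl_eq_infDist_frontier (hopen : IsOpen D) (hne : D ≠ univ) (hz : z ∈ D) :
    infDist z Dᶜ = infDist z (frontier D) := by
  obtain ⟨w, hw, hzw⟩ := exists_mem_frontier_infDist_compl_eq_dist hz hne
  refine le_antisymm ?_ ?_
  · exact infDist_le_infDist_of_subset (fun p hp => (hopen.frontier_eq ▸ hp).2) ⟨w, hw⟩
  · exact hzw ▸ infDist_le_dist_of_mem hw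

theorem infDist_frontier_pos (hopen : IsOpen D) (hne : D ≠ univ) (hz : z ∈ D) :
    0 < infDist z (frontier D) := by
  obtain ⟨w, hw, -⟩ := exists_mem_frontier_infDist_compl_eq_dist hz hne
  refine (isClosed_frontier.notMem_iff_infDist_pos ⟨w, hw⟩).1 ?_
  rw [hopen.frontier_eq]
  exact fun h => h.2 hz

theorem two_mul_infDist_frontier_le_diam (hopen : IsOpen D) (hne : D ≠ univ)
    (hbdd : Bornology.IsBounded D) (hz : z ∈ D) :
    2 * infDist z (frontier D) ≤ diam D := by
  obtain ⟨w, hw⟩ := nonempty_compl.2 hne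
  have : Nontrivial E := nontrivial_of_ne z w fun h => hw (h ▸ hz)
  rw [← infDist_compl_eq_infDist_frontier hopen hne hz,
    ← diam_ball_eq z infDist_nonneg]
  exact diam_mono ball_infDist_compl_subset hbdd

end NormedSpace

theorem one_add_div_le_one_add_mul_div_mul_sub {r δ d : ℝ} (hr : 0 ≤ r) (hδ : 0 < δ)
    (hδd : 2 * δ ≤ d) :
    1 + r / δ ≤ 1 + d * r / (δ * (d - δ)) := by
  have : r / δ ≤ d * r / (δ * (d - δ)) := by
    rw [div_le_div_iff₀ hδ (by nlinarith)]
    nlinarith [mul_nonneg hr (mul_nonneg hδ.le hδ.le)]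
  linarith

theorem one_add_mul_div_mul_sub_le_sq {r δ d : ℝ} (hr : 0 ≤ r) (hδ : 0 < δ)
    (hδd : 2 * δ ≤ d) :
    1 + d * r / (δ * (d - δ)) ≤ (1 + r / δ) ^ 2 := by
  have h : d * r / (δ * (d - δ)) ≤ 2 * (r / δ) := by
    rw [div_le_iff₀ (by nlinarith), mul_div_assoc', div_mul_eq_mul_div, le_div_iff₀ hδ]
    nlinarith [mul_nonneg (mul_nonneg hr hδ.le) (sub_nonneg.2 hδd)]
  nlinarith [div_nonneg hr hδ.le]

theorem half_log_mul_le_of_le {a b A B : ℝ} (ha : 0 < a) (hb : 0 < b) (hA : a ≤ A) (hB : b ≤ B) :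
    1 / 2 * Real.log (a * b) ≤ 1 / 2 * Real.log (A * B) := by
  gcongr
  exact ha.le.trans hA

theorem half_log_mul_le_log_mul_of_le_sq {a b A B : ℝ} (hA : 0 < A) (hB : 0 < B)
    (hAa : A ≤ a ^ 2) (hBb : B ≤ b ^ 2) :
    1 / 2 * Real.log (A * B) ≤ 2 * (1 / 2 * Real.log (a * b)) := by
  have : Real.log (A * B) ≤ Real.log ((a * b) ^ 2) :=
    Real.log_le_log (by positivity) (mul_pow a b 2 ▸ mul_le_mul hAa hBb hB.le (by positivity))
  rw [Real.log_pow] at this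
  push_cast at this
  linarith

theorem stmt_10_general {n : ℕ} (D : Set (EuclideanSpace ℝ (Fin n)))
    (hopen : IsOpen D) (hproper : D ≠ Set.univ)
    (hbdd : Bornology.IsBounded D)
    (x y : EuclideanSpace ℝ (Fin n)) (hx : x ∈ D) (hy : y ∈ D) :
    jD' D x y ≤ zetaD' D x y ∧ zetaD' D x y ≤ 2 * jD' D x y := by
  have hδ {z} (hz : z ∈ D) := infDist_frontier_pos hopen hproper hz
  have hδd {z} (hz : z ∈ D) := two_mul_infDist_frontier_le_diam hopen hproper hbdd hz
  have hlow {z} (hz : z ∈ D) :=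
    one_add_div_le_one_add_mul_div_mul_sub (dist_nonneg (x := x) (y := y)) (hδ hz) (hδd hz)
  have hup {z} (hz : z ∈ D) :=
    one_add_mul_div_mul_sub_le_sq (dist_nonneg (x := x) (y := y)) (hδ hz) (hδd hz)
  have hpos {z} (hz : z ∈ D) : 0 < 1 + dist x y / infDist z (frontier D) := by
    have := hδ hz; positivity
  unfold jD' zetaD' etaD deltaD
  exact ⟨half_log_mul_le_of_le (hpos hx) (hpos hy) (hlow hx) (hlow hy),
    half_log_mul_le_log_mul_of_le_sq ((hpos hx).trans_le (hlow hx))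
      ((hpos hy).trans_le (hlow hy)) (hup hx) (hup hy)⟩

theorem stmt_10 {n : ℕ} (hn : 2 ≤ n) (D : Set (EuclideanSpace ℝ (Fin n)))
    (hopen : IsOpen D) (hconn : IsConnected D) (hproper : D ≠ Set.univ)
    (hbdd : Bornology.IsBounded D)
    (x y : EuclideanSpace ℝ (Fin n)) (hx : x ∈ D) (hy : y ∈ D) :
    jD' D x y ≤ zetaD' D x y ∧ zetaD' D x y ≤ 2 * jD' D x y :=
  stmt_10_general D hopen hproper hbdd x y hx hy
end

section
/- Let D ⊊ ℝⁿ be a bounded domain with diameter d, and let x, y ∈ D with y in the open ball B(x, δ(x)). Then the infimal-length metric m_D with density d/η(z) satisfies m_D(x,y) ≤ log(1 + d·|x−y| / (η(x) − d·|x−y|)), provided d·|x−y| < η(x). -/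
/-- The length of a C¹ path with respect to the density `diam D / η`. -/
noncomputable def mLength {n : ℕ} (D : Set (EuclideanSpace ℝ (Fin n)))
    (γ : ℝ → EuclideanSpace ℝ (Fin n)) : ℝ :=
  ∫ t in (0:ℝ)..1, (Metric.diam D / etaD D (γ t)) * ‖deriv γ t‖

/-- The infimal path-length metric `m_D` with density `diam D / η(z)`. -/
noncomputable def mDist {n : ℕ} (D : Set (EuclideanSpace ℝ (Fin n)))
    (x y : EuclideanSpace ℝ (Fin n)) : ℝ :=
  sInf { L : ℝ | ∃ γ : ℝ → EuclideanSpace ℝ (Fin n),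
    ContDiffOn ℝ 1 γ (Set.Icc 0 1) ∧ γ 0 = x ∧ γ 1 = y ∧
    (∀ t ∈ Set.Icc (0:ℝ) 1, γ t ∈ D) ∧ L = mLength D γ }

/-!
Compare `m_D(x, y)` with the length of the segment `t ↦ x + t (y - x)`. Along it `δ` drops at
most linearly, `δ ≥ δ(x) - t |x - y|`, and since `δ ≤ d / 2` on `D` (a ball of radius `δ(z)` fits
in `D`) this gives `η ≥ (δ(x) - t s)(d - δ(x) + t s)` with `s = |x - y|`. The resulting integral is
`log (δ (d - δ + s) / ((δ - s)(d - δ)))` by partial fractions, which is below the claimed bound.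
-/

open Metric Set AffineMap Real

theorem ball_infDist_frontier_subset {E : Type*} [NormedAddCommGroup E] [NormedSpace ℝ E]
    {D : Set E} {x : E} (hx : x ∈ D) : ball x (infDist x (frontier D)) ⊆ D := by
  have hcover : ball x (infDist x (frontier D)) ⊆ interior D ∪ interior Dᶜ := by
    rw [← compl_frontier_eq_union_interior]
    exact ball_infDist_subset_compl
  rcases (convex_ball _ _).isPreconnected.subset_or_subset isOpen_interior isOpen_interior
    (disjoint_compl_right.mono interior_subset interior_subset) hcover with hD | hDc
  · exact hD.trans interior_subset
  · intro z hz
    exact absurd hx (interior_subset (hDc (mem_ball_self (pos_of_mem_ball hz))))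

theorem two_mul_infDist_frontier_le_diam_s14 {E : Type*} [NormedAddCommGroup E] [NormedSpace ℝ E]
    {D : Set E} (hD : Bornology.IsBounded D) {z : E} (hz : z ∈ D) :
    2 * infDist z (frontier D) ≤ diam D := by
  rcases subsingleton_or_nontrivial E with hE | hE
  · rw [(isClopen_discrete D).frontier_eq, infDist_empty, mul_zero]
    exact diam_nonneg
  · rw [← diam_ball_eq z infDist_nonneg]
    exact diam_mono (ball_infDist_frontier_subset hz) hD

theorem intervalIntegrable_div_mul_sub {d δ s : ℝ} (hs : 0 ≤ s) (hsδ : s < δ) (hδd : δ < d) :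
    IntervalIntegrable (fun t => d * s / ((δ - t * s) * (d - (δ - t * s))))
      MeasureTheory.volume 0 1 := by
  refine ContinuousOn.intervalIntegrable_of_Icc zero_le_one
    (ContinuousOn.div (by fun_prop) (by fun_prop) fun t ht => ?_)
  exact (mul_pos (by nlinarith [ht.2]) (by nlinarith [ht.1])).ne'

theorem integral_div_mul_sub_eq_log {d δ s : ℝ} (hs : 0 ≤ s) (hsδ : s < δ) (hδd : δ < d) :
    ∫ t in (0:ℝ)..1, d * s / ((δ - t * s) * (d - (δ - t * s))) =
      log (δ * (d - δ + s) / ((δ - s) * (d - δ))) := by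
  -- antiderivative `log (d - δ + t s) - log (δ - t s)`, by partial fractions
  have hderiv : ∀ t ∈ uIcc (0:ℝ) 1, HasDerivAt (fun t => log (d - (δ - t * s)) - log (δ - t * s))
      (d * s / ((δ - t * s) * (d - (δ - t * s)))) t := by
    intro t ht
    rw [uIcc_of_le zero_le_one] at ht
    have h1 : 0 < δ - t * s := by nlinarith [ht.2]
    have h2 : 0 < d - (δ - t * s) := by nlinarith [ht.1]
    have hlin : HasDerivAt (fun t => δ - t * s) (-s) t := by
      simpa using ((hasDerivAt_id t).mul_const s).const_sub δ
    refine (((hlin.const_sub d).log h2.ne').sub (hlin.log h1.ne')).congr_deriv ?_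
    rw [div_sub_div _ _ h2.ne' h1.ne']
    ring
  rw [intervalIntegral.integral_eq_sub_of_hasDerivAt hderiv
      (intervalIntegrable_div_mul_sub hs hsδ hδd),
    log_div (by nlinarith) (by nlinarith), log_mul (by linarith) (by linarith),
    log_mul (by linarith) (by linarith)]
  ring_nf

theorem log_div_le_log_one_add {d δ s : ℝ} (hs : 0 ≤ s) (hsδ : s < δ)
    (hsmall : d * s < δ * (d - δ)) :
    log (δ * (d - δ + s) / ((δ - s) * (d - δ))) ≤ log (1 + d * s / (δ * (d - δ) - d * s)) := by
  have hδ : 0 < δ := by linarith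
  have hdδ : 0 < d - δ := by nlinarith
  have hgap : 0 < δ * (d - δ) - d * s := by linarith
  have hrhs : 1 + d * s / (δ * (d - δ) - d * s) = δ * (d - δ) / (δ * (d - δ) - d * s) := by
    field_simp
    ring
  rw [hrhs]
  apply log_le_log (by apply div_pos <;> nlinarith)
  rw [div_le_div_iff₀ (by nlinarith) hgap]
  -- the two sides differ by `δ d s²`
  nlinarith [mul_nonneg (mul_nonneg hδ.le (by linarith : (0:ℝ) ≤ d)) (sq_nonneg s)]

section

variable {n : ℕ} {D : Set (EuclideanSpace ℝ (Fin n))}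

theorem continuous_etaD : Continuous (etaD D) := by
  have hδ : Continuous (deltaD D) := continuous_infDist_pt (frontier D)
  exact hδ.mul (continuous_const.sub hδ)

-- `u ↦ u (d - u)` increases up to `d / 2`, and `δ(z) ≤ d / 2`.
theorem mul_sub_le_etaD (hD : Bornology.IsBounded D) {z : EuclideanSpace ℝ (Fin n)} (hz : z ∈ D)
    {u : ℝ} (hu : u ≤ deltaD D z) : u * (diam D - u) ≤ etaD D z := by
  have h2δ := two_mul_infDist_frontier_le_diam_s14 hD hz
  unfold etaD deltaD at *
  nlinarith [mul_nonneg (sub_nonneg.2 hu) (by linarith : 0 ≤ diam D - infDist z (frontier D) - u)]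

theorem etaD_nonneg (hD : Bornology.IsBounded D) {z : EuclideanSpace ℝ (Fin n)} (hz : z ∈ D) :
    0 ≤ etaD D z := by
  simpa using mul_sub_le_etaD hD hz (infDist_nonneg : 0 ≤ deltaD D z)

theorem mLength_nonneg (hD : Bornology.IsBounded D) {γ : ℝ → EuclideanSpace ℝ (Fin n)}
    (hγD : ∀ t ∈ Icc (0:ℝ) 1, γ t ∈ D) : 0 ≤ mLength D γ :=
  intervalIntegral.integral_nonneg zero_le_one fun t ht =>
    mul_nonneg (div_nonneg diam_nonneg (etaD_nonneg hD (hγD t ht))) (norm_nonneg _)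

theorem mDist_le_mLength (hD : Bornology.IsBounded D) {γ : ℝ → EuclideanSpace ℝ (Fin n)}
    (hγ : ContDiffOn ℝ 1 γ (Icc 0 1)) (hγD : ∀ t ∈ Icc (0:ℝ) 1, γ t ∈ D) :
    mDist D (γ 0) (γ 1) ≤ mLength D γ :=
  csInf_le ⟨0, by rintro L ⟨γ', -, -, -, hγ'D, rfl⟩; exact mLength_nonneg hD hγ'D⟩
    ⟨γ, hγ, rfl, rfl, hγD, rfl⟩

theorem mLength_lineMap (x y : EuclideanSpace ℝ (Fin n)) :
    mLength D (lineMap x y) = ∫ t in (0:ℝ)..1, diam D / etaD D (lineMap x y t) * dist x y := by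
  simp only [mLength, hasDerivAt_lineMap.deriv, dist_eq_norm']

theorem lineMap_mem_of_mem_ball {x y : EuclideanSpace ℝ (Fin n)} (hx : x ∈ D)
    (hy : y ∈ ball x (deltaD D x)) {t : ℝ} (ht : t ∈ Icc (0:ℝ) 1) : lineMap x y t ∈ D := by
  apply ball_infDist_frontier_subset hx
  rw [mem_ball, dist_lineMap_left, Real.norm_of_nonneg ht.1]
  exact (mul_le_of_le_one_left dist_nonneg ht.2).trans_lt (mem_ball'.1 hy)

theorem deltaD_sub_mul_le_deltaD_lineMap (x y : EuclideanSpace ℝ (Fin n)) {t : ℝ} (ht : 0 ≤ t) :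
    deltaD D x - t * dist x y ≤ deltaD D (lineMap x y t) := by
  have h := infDist_le_infDist_add_dist (x := x) (y := lineMap x y t) (s := frontier D)
  rw [dist_left_lineMap, Real.norm_of_nonneg ht] at h
  unfold deltaD
  linarith

end

theorem stmt_14_general {n : ℕ} (D : Set (EuclideanSpace ℝ (Fin n)))
    (hbdd : Bornology.IsBounded D)
    (x y : EuclideanSpace ℝ (Fin n)) (hx : x ∈ D)
    (hball : y ∈ Metric.ball x (deltaD D x))
    (hsmall : Metric.diam D * dist x y < etaD D x) :
    mDist D x y ≤
      Real.log (1 + Metric.diam D * dist x y /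
        (etaD D x - Metric.diam D * dist x y)) := by
  set d := diam D
  set δ := deltaD D x
  set s := dist x y
  have hs : 0 ≤ s := dist_nonneg
  have hsδ : s < δ := mem_ball'.1 hball
  have hsmall' : d * s < δ * (d - δ) := hsmall
  have hδd : δ < d := by nlinarith
  have hmem : ∀ t ∈ Icc (0:ℝ) 1, lineMap x y t ∈ D := fun _ => lineMap_mem_of_mem_ball hx hball
  have hη : ∀ t ∈ Icc (0:ℝ) 1, (δ - t * s) * (d - (δ - t * s)) ≤ etaD D (lineMap x y t) ∧
      0 < (δ - t * s) * (d - (δ - t * s)) := fun t ht =>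
    ⟨mul_sub_le_etaD hbdd (hmem t ht) (deltaD_sub_mul_le_deltaD_lineMap x y ht.1),
      mul_pos (by nlinarith [ht.2]) (by nlinarith [ht.1])⟩
  have hLint : IntervalIntegrable (fun t => d / etaD D (lineMap x y t) * s)
      MeasureTheory.volume 0 1 :=
    ContinuousOn.intervalIntegrable_of_Icc zero_le_one <|
      ((continuousOn_const.div (continuous_etaD.comp_continuousOn (by fun_prop))
        fun t ht => (lt_of_lt_of_le (hη t ht).2 (hη t ht).1).ne').mul continuousOn_const)
  calc mDist D x y ≤ mLength D (lineMap x y) := by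
        simpa using mDist_le_mLength hbdd (contDiff_lineMap x y).contDiffOn hmem
    _ = ∫ t in (0:ℝ)..1, d / etaD D (lineMap x y t) * s := mLength_lineMap x y
    _ ≤ ∫ t in (0:ℝ)..1, d * s / ((δ - t * s) * (d - (δ - t * s))) :=
        intervalIntegral.integral_mono_on zero_le_one hLint
          (intervalIntegrable_div_mul_sub hs hsδ hδd) fun t ht => by
          rw [div_mul_eq_mul_div, mul_comm d s]
          exact div_le_div_of_nonneg_left (by positivity) (hη t ht).2 (hη t ht).1
    _ = log (δ * (d - δ + s) / ((δ - s) * (d - δ))) := integral_div_mul_sub_eq_log hs hsδ hδd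
    _ ≤ _ := log_div_le_log_one_add hs hsδ hsmall'

theorem stmt_14 {n : ℕ} (hn : 2 ≤ n) (D : Set (EuclideanSpace ℝ (Fin n)))
    (hopen : IsOpen D) (hconn : IsConnected D) (hproper : D ≠ Set.univ)
    (hbdd : Bornology.IsBounded D)
    (x y : EuclideanSpace ℝ (Fin n)) (hx : x ∈ D) (hy : y ∈ D)
    (hball : y ∈ Metric.ball x (deltaD D x))
    (hsmall : Metric.diam D * dist x y < etaD D x) :
    mDist D x y ≤
      Real.log (1 + Metric.diam D * dist x y /
        (etaD D x - Metric.diam D * dist x y)) :=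
  stmt_14_general D hbdd x y hx hball hsmall
end
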